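/- arXiv:math/9307224 — 5 statements merged into one kernel-verified Lean document; each statement's English description precedes it below -/
import Mathlib

section
/- Let μ > 0, α > −1/2 and n ∈ ℕ. Then γ_α(n)/γ_{μ+α}(n) = (1/B(α + 1/2, μ)) ∫_{−1}^{1} t^n |t|^{2α} (1−t)^{μ−1} (1+t)^{μ} dt. -/
open MeasureTheory
open scoped BigOperators Nat

/-- Generalized factorial `γ_μ(n)`: `γ_μ(0) = 1`,
`γ_μ(n+1) = (n + 1 + 2μ θ_{n+1}) γ_μ(n)` where `θ_k = 1` if `k` is odd, `0` if even. -/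
noncomputable def genGamma (μ : ℝ) : ℕ → ℝ
  | 0 => 1
  | n + 1 => ((n : ℝ) + 1 + 2 * μ * (if (n + 1) % 2 = 1 then (1 : ℝ) else 0)) * genGamma μ n

/-- Generalized exponential function `e_μ(z) = Σ_{n≥0} z^n / γ_μ(n)`. -/
noncomputable def genExp (μ : ℝ) (z : ℂ) : ℂ :=
  ∑' n : ℕ, z ^ n / (genGamma μ n : ℂ)

/-- Generalized Hermite polynomial
`H_n^μ(x) = n! Σ_{k=0}^{⌊n/2⌋} (-1)^k (2x)^{n-2k} / (k! γ_μ(n-2k))`. -/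
noncomputable def genHermite (μ : ℝ) (n : ℕ) (x : ℂ) : ℂ :=
  (n ! : ℂ) * ∑ k ∈ Finset.range (n / 2 + 1),
    (-1) ^ k * (2 * x) ^ (n - 2 * k) / ((k ! : ℂ) * ((genGamma μ (n - 2 * k) : ℝ) : ℂ))

/-- Dunkl operator `(D_μ f)(x) = f'(x) + (μ/x)(f(x) - f(-x))`. -/
noncomputable def dunkl (μ : ℝ) (f : ℝ → ℂ) (x : ℝ) : ℂ :=
  deriv f x + ((μ / x : ℝ) : ℂ) * (f x - f (-x))

/-- Euler beta function `B(a,b) = Γ(a)Γ(b)/Γ(a+b)`. -/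
noncomputable def realBeta (a b : ℝ) : ℝ :=
  Real.Gamma a * Real.Gamma b / Real.Gamma (a + b)

/-!
Split the integral at `0` and fold the negative half onto the positive one. For `0 < s ≤ 1` the
integrand at `s` and at `-s` share the factor `s ^ (2α) (1 - s²) ^ (μ - 1)`, and what remains,
`s ^ n (1 + s) + (-s) ^ n (1 - s)`, equals `2 s ^ (2k)` with `k = ⌈n / 2⌉ = (n + 1) / 2`. So the
integral is `∫₀¹ 2s (s²) ^ (k + α - 1/2) (1 - s²) ^ (μ - 1) ds`, which `u = s²` turns into
`B(k + α + 1/2, μ)`. Unrolling the recursion gives `γ_β(n) Γ(β + 1/2) = 2ⁿ ⌊n/2⌋! Γ(k + β + 1/2)`,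
and the quotient of the two Beta values is exactly the quotient of these Gamma expressions.
-/

open Set

theorem genGamma_two_mul_add_one (β : ℝ) (m : ℕ) :
    genGamma β (2 * m + 1) = (2 * m + 1 + 2 * β) * genGamma β (2 * m) := by
  rw [genGamma, if_pos (by omega)]
  push_cast
  ring

theorem genGamma_two_mul_add_two (β : ℝ) (m : ℕ) :
    genGamma β (2 * m + 2) = (2 * m + 2) * genGamma β (2 * m + 1) := by
  rw [genGamma, if_neg (by omega)]
  push_cast
  ring

theorem genGamma_mul_Gamma {β : ℝ} (hβ : -(1 / 2) < β) (n : ℕ) :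
    genGamma β n * Real.Gamma (β + 1 / 2) =
      2 ^ n * (n / 2)! * Real.Gamma (((n + 1) / 2 : ℕ) + β + 1 / 2) := by
  induction n with
  | zero => simp [genGamma]
  | succ n ih =>
    obtain ⟨m, rfl | rfl⟩ := Nat.even_or_odd' n
    · have hpos : 0 < (m : ℝ) + β + 1 / 2 := by linarith [(Nat.cast_nonneg m : (0 : ℝ) ≤ m)]
      rw [genGamma_two_mul_add_one, mul_assoc, ih, show (2 * m + 1 + 1) / 2 = m + 1 by omega,
        show (2 * m + 1) / 2 = m by omega, show 2 * m / 2 = m by omega, Nat.cast_succ,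
        show (m : ℝ) + 1 + β + 1 / 2 = m + β + 1 / 2 + 1 by ring, Real.Gamma_add_one hpos.ne']
      ring
    · rw [genGamma_two_mul_add_two, mul_assoc, ih, show (2 * m + 1 + 1) / 2 = m + 1 by omega,
        show (2 * m + 1 + 1 + 1) / 2 = m + 1 by omega, show (2 * m + 1) / 2 = m by omega,
        Nat.factorial_succ]
      push_cast
      ring

theorem ofReal_rpow_mul_one_sub_rpow {x : ℝ} (hx : x ∈ Icc (0 : ℝ) 1) (a b : ℝ) :
    ((x ^ a * (1 - x) ^ b : ℝ) : ℂ) = (x : ℂ) ^ (a : ℂ) * (1 - (x : ℂ)) ^ (b : ℂ) := by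
  rw [Complex.ofReal_mul, Complex.ofReal_cpow hx.1, Complex.ofReal_cpow (sub_nonneg.mpr hx.2),
    Complex.ofReal_sub, Complex.ofReal_one]

theorem intervalIntegrable_rpow_mul_one_sub_rpow {a b : ℝ} (ha : -1 < a) (hb : -1 < b) :
    IntervalIntegrable (fun x : ℝ => x ^ a * (1 - x) ^ b) volume 0 1 := by
  have h := Complex.betaIntegral_convergent (u := a + 1) (v := b + 1)
    (by simp; linarith) (by simp; linarith)
  simp only [add_sub_cancel_right] at h
  rw [intervalIntegrable_iff_integrableOn_Icc_of_le zero_le_one] at h ⊢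
  refine IntegrableOn.congr_fun h.re (fun x hx => ?_) measurableSet_Icc
  rw [RCLike.re_to_complex, ← ofReal_rpow_mul_one_sub_rpow hx, Complex.ofReal_re]

theorem integral_rpow_sub_one_mul_one_sub_rpow_sub_one {a b : ℝ} (ha : 0 < a) (hb : 0 < b) :
    ∫ x in (0 : ℝ)..1, x ^ (a - 1) * (1 - x) ^ (b - 1) = realBeta a b := by
  have h : ∫ x in (0 : ℝ)..1, ((x ^ (a - 1) * (1 - x) ^ (b - 1) : ℝ) : ℂ) =
      Complex.betaIntegral a b := by
    refine intervalIntegral.integral_congr (fun x hx => ?_)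
    rw [ofReal_rpow_mul_one_sub_rpow (by simpa using hx)]
    push_cast
    rfl
  rw [intervalIntegral.integral_ofReal, Complex.betaIntegral_eq_Gamma_mul_div _ _
    (by simpa using ha) (by simpa using hb), ← Complex.ofReal_add, Complex.Gamma_ofReal,
    Complex.Gamma_ofReal, Complex.Gamma_ofReal] at h
  exact_mod_cast h

theorem intervalIntegral.integral_neg_eq_integral_add_comp_neg {E : Type*} [NormedAddCommGroup E]
    [NormedSpace ℝ E] {f : ℝ → E} {a : ℝ} (hf : IntervalIntegrable f volume 0 a)
    (hf_neg : IntervalIntegrable (fun x => f (-x)) volume 0 a) :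
    ∫ x in -a..a, f x = ∫ x in 0..a, (f x + f (-x)) := by
  have hf_left : IntervalIntegrable f volume (-a) 0 :=
    (IntervalIntegrable.iff_comp_neg).mpr (by simpa using hf_neg.symm)
  rw [← integral_add_adjacent_intervals hf_left hf, intervalIntegral.integral_add hf hf_neg,
    add_comm, ← neg_zero, ← intervalIntegral.integral_comp_neg, neg_zero]

theorem image_sq_Ioc {a : ℝ} (ha : 0 ≤ a) : (fun x : ℝ => x ^ 2) '' Ioc 0 a = Ioc 0 (a ^ 2) := by
  ext u
  constructor
  · rintro ⟨x, ⟨hx0, hxa⟩, rfl⟩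
    exact ⟨by positivity, pow_le_pow_left₀ hx0.le hxa 2⟩
  · rintro ⟨hu0, hua⟩
    refine ⟨√u, ⟨Real.sqrt_pos.mpr hu0, ?_⟩, Real.sq_sqrt hu0.le⟩
    simpa [Real.sqrt_sq ha] using Real.sqrt_le_sqrt hua

theorem injOn_sq_Ioc (a : ℝ) : InjOn (fun x : ℝ => x ^ 2) (Ioc 0 a) := fun _ hx _ hy h =>
  (pow_left_inj₀ hx.1.le hy.1.le two_ne_zero).mp h

theorem hasDerivWithinAt_sq (s : Set ℝ) (x : ℝ) :
    HasDerivWithinAt (fun x : ℝ => x ^ 2) (2 * x) s x := by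
  simpa using (hasDerivAt_pow 2 x).hasDerivWithinAt

section
variable {E : Type*} [NormedAddCommGroup E] [NormedSpace ℝ E] {a : ℝ}

theorem intervalIntegrable_comp_sq_iff (ha : 0 ≤ a) (g : ℝ → E) :
    IntervalIntegrable (fun x => (2 * x) • g (x ^ 2)) volume 0 a ↔
      IntervalIntegrable g volume 0 (a ^ 2) := by
  rw [intervalIntegrable_iff_integrableOn_Ioc_of_le ha,
    intervalIntegrable_iff_integrableOn_Ioc_of_le (by positivity), ← image_sq_Ioc ha,
    integrableOn_image_iff_integrableOn_abs_deriv_smul measurableSet_Ioc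
      (fun x _ => hasDerivWithinAt_sq _ x) (injOn_sq_Ioc a)]
  refine integrableOn_congr_fun (fun x hx => ?_) measurableSet_Ioc
  simp [abs_of_pos hx.1]

theorem intervalIntegral.integral_comp_sq (ha : 0 ≤ a) (g : ℝ → E) :
    ∫ x in 0..a, (2 * x) • g (x ^ 2) = ∫ u in 0..a ^ 2, g u := by
  rw [intervalIntegral.integral_of_le ha, intervalIntegral.integral_of_le (by positivity),
    ← image_sq_Ioc ha,
    integral_image_eq_integral_abs_deriv_smul measurableSet_Ioc
      (fun x _ => hasDerivWithinAt_sq _ x) (injOn_sq_Ioc a)]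
  refine setIntegral_congr_fun measurableSet_Ioc (fun x hx => ?_)
  simp [abs_of_pos hx.1]

end

theorem pow_mul_one_add_add_neg_pow_mul_one_sub {R : Type*} [CommRing R] (s : R) (n : ℕ) :
    s ^ n * (1 + s) + (-s) ^ n * (1 - s) = 2 * s ^ (2 * ((n + 1) / 2)) := by
  obtain ⟨m, rfl | rfl⟩ := Nat.even_or_odd' n
  · rw [show (2 * m + 1) / 2 = m by omega, Even.neg_pow ⟨m, by ring⟩]
    ring
  · rw [show (2 * m + 1 + 1) / 2 = m + 1 by omega, Odd.neg_pow ⟨m, rfl⟩]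
    ring

theorem integrand_add_integrand_neg {μ α : ℝ} (hμ : μ ≠ 0) (n : ℕ) {s : ℝ}
    (hs : s ∈ Ioc (0 : ℝ) 1) :
    s ^ n * |s| ^ (2 * α) * (1 - s) ^ (μ - 1) * (1 + s) ^ μ +
        (-s) ^ n * |-s| ^ (2 * α) * (1 - -s) ^ (μ - 1) * (1 + -s) ^ μ =
      2 * s * ((s ^ 2) ^ (((n + 1) / 2 : ℕ) + α + 1 / 2 - 1) * (1 - s ^ 2) ^ (μ - 1)) := by
  obtain ⟨hs0, hs1⟩ := hs
  set k := (n + 1) / 2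
  have h_one_add : (1 + s) ^ μ = (1 + s) ^ (μ - 1) * (1 + s) := by
    rw [← Real.rpow_add_one (by linarith), sub_add_cancel]
  have h_one_sub : (1 - s) ^ μ = (1 - s) ^ (μ - 1) * (1 - s) := by
    conv_lhs => rw [← sub_add_cancel μ 1]
    rw [Real.rpow_add' (by linarith) (by simpa using hμ), Real.rpow_one]
  have h_prod : (1 - s) ^ (μ - 1) * (1 + s) ^ (μ - 1) = (1 - s ^ 2) ^ (μ - 1) := by
    rw [← Real.mul_rpow (by linarith) (by linarith)]
    ring_nf
  have h_sq : s * (s ^ 2) ^ ((k : ℝ) + α + 1 / 2 - 1) = s ^ (2 * k) * s ^ (2 * α) := by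
    rw [← Real.rpow_natCast s 2, ← Real.rpow_mul hs0.le, mul_comm s, ← Real.rpow_add_one hs0.ne',
      ← Real.rpow_natCast s (2 * k), ← Real.rpow_add hs0]
    push_cast
    ring_nf
  rw [abs_neg, abs_of_pos hs0, sub_neg_eq_add, ← sub_eq_add_neg, h_one_add, h_one_sub]
  calc _ = s ^ (2 * α) * ((1 - s) ^ (μ - 1) * (1 + s) ^ (μ - 1)) *
        (s ^ n * (1 + s) + (-s) ^ n * (1 - s)) := by ring
    _ = s ^ (2 * α) * (1 - s ^ 2) ^ (μ - 1) * (2 * s ^ (2 * k)) := by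
      rw [h_prod, pow_mul_one_add_add_neg_pow_mul_one_sub]
    _ = _ := by linear_combination (-(2 * (1 - s ^ 2) ^ (μ - 1))) * h_sq

theorem integral_neg_one_one_eq_realBeta {μ α : ℝ} (hμ : 0 < μ) (hα : -(1 / 2) < α) (n : ℕ) :
    ∫ t in (-1 : ℝ)..1, t ^ n * |t| ^ (2 * α) * (1 - t) ^ (μ - 1) * (1 + t) ^ μ =
      realBeta (((n + 1) / 2 : ℕ) + α + 1 / 2) μ := by
  set F : ℝ → ℝ := fun t => t ^ n * |t| ^ (2 * α) * (1 - t) ^ (μ - 1) * (1 + t) ^ μ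
  have ha : 0 < ((n + 1) / 2 : ℕ) + α + 1 / 2 := by
    linarith [(Nat.cast_nonneg ((n + 1) / 2) : (0 : ℝ) ≤ _)]
  set a : ℝ := ((n + 1) / 2 : ℕ) + α + 1 / 2
  set g : ℝ → ℝ := fun u => u ^ (a - 1) * (1 - u) ^ (μ - 1)
  have h_symm : EqOn (fun s => F s + F (-s)) (fun s => (2 * s) • g (s ^ 2)) (uIoc 0 1) := by
    intro s hs
    rw [uIoc_of_le zero_le_one] at hs
    exact integrand_add_integrand_neg hμ.ne' n hs
  have hg : IntervalIntegrable g volume 0 1 :=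
    intervalIntegrable_rpow_mul_one_sub_rpow (by linarith) (by linarith)
  have hF : IntervalIntegrable F volume 0 1 := by
    have hw := intervalIntegrable_rpow_mul_one_sub_rpow (a := 2 * α) (b := μ - 1)
      (by linarith) (by linarith)
    refine (hw.continuousOn_mul (g := fun t => t ^ n * (1 + t) ^ μ) ?_).congr fun t ht => ?_
    · exact ((continuous_pow n).mul ((continuous_const.add continuous_id).rpow_const
        fun _ => Or.inr hμ.le)).continuousOn
    · rw [uIoc_of_le zero_le_one] at ht
      simp only [F, abs_of_pos ht.1]
      ring
  have hF_neg : IntervalIntegrable (fun s => F (-s)) volume 0 1 := by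
    have h_sum := ((intervalIntegrable_comp_sq_iff zero_le_one g).mpr (by simpa using hg)).congr
      h_symm.symm
    simpa using h_sum.sub hF
  rw [intervalIntegral.integral_neg_eq_integral_add_comp_neg hF hF_neg,
    intervalIntegral.integral_congr_ae (.of_forall h_symm), intervalIntegral.integral_comp_sq
    zero_le_one, one_pow, integral_rpow_sub_one_mul_one_sub_rpow_sub_one ha hμ]

/-- For `μ > 0`, `α > -1/2`, `n ∈ ℕ`:
`γ_α(n)/γ_{μ+α}(n) = (1/B(α+1/2, μ)) ∫_{-1}^1 t^n |t|^{2α} (1-t)^{μ-1} (1+t)^μ dt`. -/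
theorem genGamma_ratio_integral (μ α : ℝ) (hμ : 0 < μ) (hα : -(1/2) < α) (n : ℕ) :
    genGamma α n / genGamma (μ + α) n =
      (1 / realBeta (α + 1/2) μ) *
        ∫ t in (-1 : ℝ)..1, t ^ n * |t| ^ (2 * α) * (1 - t) ^ (μ - 1) * (1 + t) ^ μ := by
  have hk : (0 : ℝ) ≤ ((n + 1) / 2 : ℕ) := Nat.cast_nonneg _
  have h_α := genGamma_mul_Gamma hα n
  have h_μα := genGamma_mul_Gamma (β := μ + α) (by linarith) n
  have hΓ₁ : 0 < Real.Gamma (α + 1 / 2) := Real.Gamma_pos_of_pos (by linarith)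
  have hΓ₂ : 0 < Real.Gamma (μ + α + 1 / 2) := Real.Gamma_pos_of_pos (by linarith)
  have hΓ₃ : 0 < Real.Gamma (((n + 1) / 2 : ℕ) + (μ + α) + 1 / 2) :=
    Real.Gamma_pos_of_pos (by linarith)
  have hΓ₄ : 0 < Real.Gamma μ := Real.Gamma_pos_of_pos hμ
  rw [integral_neg_one_one_eq_realBeta hμ hα n, eq_div_of_mul_eq (by positivity) h_α,
    eq_div_of_mul_eq (by positivity) h_μα, realBeta, realBeta,
    show (((n + 1) / 2 : ℕ) : ℝ) + α + 1 / 2 + μ = ((n + 1) / 2 : ℕ) + (μ + α) + 1 / 2 by ring,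
    show α + 1 / 2 + μ = μ + α + 1 / 2 by ring]
  field_simp
end

section
/- Let μ > 0, n ∈ ℕ and x ∈ ℂ. Then H_n^μ(x) = (1/B(1/2, μ)) ∫_{−1}^{1} H_n(x t) (1−t)^{μ−1} (1+t)^{μ} dt, where H_n is the classical (physicists') Hermite polynomial. -/
open MeasureTheory
open scoped BigOperators Nat

/-!
Expanding `H_n(xt)` in powers of `t`, the identity reduces to the moments
`M_m = ∫_{-1}^1 t^m (1-t)^{μ-1} (1+t)^μ dt`, which have to equal `m! B(1/2, μ) / γ_μ(m)`.
Integrating the derivative of `t^m (1-t)^μ (1+t)^{μ+1}` over `[-1, 1]` gives the recurrence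
`(2μ + 1 + m) M_{m+1} = M_m + m M_{m-1}`, which `m! / γ_μ(m)` also satisfies (check separately
for `m` even and odd), and `M_0 = B(1/2, μ)` by the substitution `t = 1 - 2s` and Legendre's
duplication formula.
-/

open Set Real

lemma genGamma_succ_of_even (μ : ℝ) {n : ℕ} (hn : Even n) :
    genGamma μ (n + 1) = (n + 1 + 2 * μ) * genGamma μ n := by
  simp [genGamma, Nat.succ_mod_two_eq_one_iff.mpr (Nat.even_iff.mp hn)]

lemma genGamma_succ_of_odd (μ : ℝ) {n : ℕ} (hn : Odd n) :
    genGamma μ (n + 1) = (n + 1) * genGamma μ n := by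
  simp [genGamma, Nat.succ_mod_two_eq_zero_iff.mpr (Nat.odd_iff.mp hn)]

lemma genGamma_pos {μ : ℝ} (hμ : -1 / 2 < μ) : ∀ n, 0 < genGamma μ n
  | 0 => one_pos
  | n + 1 => by
    have hn : (0 : ℝ) ≤ n := n.cast_nonneg
    rcases n.even_or_odd with hpar | hpar
    · rw [genGamma_succ_of_even μ hpar]
      exact mul_pos (by linarith) (genGamma_pos hμ n)
    · rw [genGamma_succ_of_odd μ hpar]
      exact mul_pos (by linarith) (genGamma_pos hμ n)

lemma genGamma_zero_left (n : ℕ) : genGamma 0 n = n ! := by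
  induction n with
  | zero => simp [genGamma]
  | succ n ih => simp [genGamma, ih, Nat.factorial_succ]

lemma realBeta_eq_integral {a b : ℝ} (ha : 0 < a) (hb : 0 < b) :
    realBeta a b = ∫ s in (0 : ℝ)..1, s ^ (a - 1) * (1 - s) ^ (b - 1) := by
  have hcpow : EqOn (fun s : ℝ => (s : ℂ) ^ ((a : ℂ) - 1) * (1 - (s : ℂ)) ^ ((b : ℂ) - 1))
      (fun s : ℝ => ((s ^ (a - 1) * (1 - s) ^ (b - 1) : ℝ) : ℂ)) (uIcc 0 1) := by
    intro s hs
    rw [uIcc_of_le zero_le_one] at hs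
    simp only [Complex.ofReal_mul, Complex.ofReal_cpow hs.1,
      Complex.ofReal_cpow (sub_nonneg.mpr hs.2)]
    push_cast
    rfl
  rw [show realBeta a b = ProbabilityTheory.beta a b from rfl,
    ProbabilityTheory.beta_eq_betaIntegralReal a b ha hb, Complex.betaIntegral,
    intervalIntegral.integral_congr hcpow, intervalIntegral.integral_ofReal, Complex.ofReal_re]

lemma integral_one_sub_rpow_mul_one_add_rpow {a b : ℝ} (ha : 0 < a) (hb : 0 < b) :
    ∫ t in (-1 : ℝ)..1, (1 - t) ^ (a - 1) * (1 + t) ^ (b - 1) = 2 ^ (a + b - 1) * realBeta a b := by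
  have hsubst := intervalIntegral.integral_comp_sub_mul
    (fun t : ℝ => (1 - t) ^ (a - 1) * (1 + t) ^ (b - 1)) (a := 0) (b := 1) two_ne_zero 1
  have hscale : EqOn (fun s : ℝ => (1 - (1 - 2 * s)) ^ (a - 1) * (1 + (1 - 2 * s)) ^ (b - 1))
      (fun s => 2 ^ (a + b - 2) * (s ^ (a - 1) * (1 - s) ^ (b - 1))) (uIcc 0 1) := by
    intro s hs
    rw [uIcc_of_le zero_le_one] at hs
    simp only [show 1 - (1 - 2 * s) = 2 * s by ring, show 1 + (1 - 2 * s) = 2 * (1 - s) by ring,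
      mul_rpow zero_le_two hs.1, mul_rpow zero_le_two (sub_nonneg.mpr hs.2),
      show a + b - 2 = (a - 1) + (b - 1) by ring, rpow_add two_pos]
    ring
  rw [intervalIntegral.integral_congr hscale, intervalIntegral.integral_const_mul,
    ← realBeta_eq_integral ha hb] at hsubst
  norm_num at hsubst
  have h2 : (2 : ℝ) ^ (a + b - 1) = 2 * 2 ^ (a + b - 2) := by
    rw [show a + b - 1 = 1 + (a + b - 2) by ring, rpow_add two_pos, rpow_one]
  rw [h2]
  linarith

lemma realBeta_one_half_eq_two_rpow_mul {μ : ℝ} (hμ : 0 < μ) :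
    realBeta (1 / 2) μ = 2 ^ (2 * μ) * realBeta μ (μ + 1) := by
  have hdup := Gamma_mul_Gamma_add_half μ
  have hpow : (2 : ℝ) ^ (2 * μ) * 2 ^ (1 - 2 * μ) = 2 := by
    rw [← rpow_add two_pos]; norm_num
  have hΓ := (Gamma_pos_of_pos (by linarith : 0 < μ + 1 / 2)).ne'
  simp only [realBeta, Gamma_one_half_eq, show μ + (μ + 1) = 2 * μ + 1 by ring,
    Gamma_add_one hμ.ne', Gamma_add_one (by positivity : 2 * μ ≠ 0), add_comm (1 / 2 : ℝ) μ]
  rw [mul_div_assoc', div_eq_div_iff hΓ (by positivity)]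
  linear_combination (-μ * Gamma μ * 2 ^ (2 * μ)) * hdup - (μ * Gamma μ * Gamma (2 * μ) * √π) * hpow

lemma intervalIntegrable_mul_weight {μ : ℝ} (hμ : 0 < μ) {g : ℝ → ℝ} (hg : Continuous g) :
    IntervalIntegrable (fun t => g t * ((1 - t) ^ (μ - 1) * (1 + t) ^ μ)) volume (-1) 1 := by
  have hsing : IntervalIntegrable (fun t : ℝ => (1 - t) ^ (μ - 1)) volume (-1) 1 := by
    have h := ((intervalIntegral.intervalIntegrable_rpow' (a := 0) (b := 2)
      (by linarith : -1 < μ - 1)).comp_sub_left 1).symm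
    norm_num at h
    exact h
  have hcont : Continuous fun t : ℝ => (1 + t) ^ μ * g t :=
    ((continuous_const.add continuous_id).rpow_const fun _ => Or.inr hμ.le).mul hg
  convert hsing.mul_continuousOn hcont.continuousOn using 1
  funext t
  ring

noncomputable def genHermiteMoment (μ : ℝ) (m : ℕ) : ℝ :=
  ∫ t in (-1 : ℝ)..1, t ^ m * ((1 - t) ^ (μ - 1) * (1 + t) ^ μ)

lemma intervalIntegrable_pow_mul_weight {μ : ℝ} (hμ : 0 < μ) (m : ℕ) :
    IntervalIntegrable (fun t => t ^ m * ((1 - t) ^ (μ - 1) * (1 + t) ^ μ)) volume (-1) 1 :=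
  intervalIntegrable_mul_weight hμ (continuous_pow m)

lemma genHermiteMoment_zero {μ : ℝ} (hμ : 0 < μ) : genHermiteMoment μ 0 = realBeta (1 / 2) μ := by
  have h := integral_one_sub_rpow_mul_one_add_rpow hμ (by linarith : 0 < μ + 1)
  rw [add_sub_cancel_right, show μ + (μ + 1) - 1 = 2 * μ by ring] at h
  rw [realBeta_one_half_eq_two_rpow_mul hμ]
  simpa [genHermiteMoment] using h

lemma hasDerivAt_pow_mul_one_sub_rpow_mul_one_add_rpow (μ : ℝ) (m : ℕ) {t : ℝ}
    (ht : t ∈ Ioo (-1 : ℝ) 1) :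
    HasDerivAt (fun t => t ^ m * ((1 - t) ^ μ * (1 + t) ^ (μ + 1)))
      (m * (t ^ (m - 1) * ((1 - t) ^ (μ - 1) * (1 + t) ^ μ))
        + t ^ m * ((1 - t) ^ (μ - 1) * (1 + t) ^ μ)
        - (2 * μ + 1 + m) * (t ^ (m + 1) * ((1 - t) ^ (μ - 1) * (1 + t) ^ μ))) t := by
  have h1 : 0 < 1 - t := by linarith [ht.2]
  have h2 : 0 < 1 + t := by linarith [ht.1]
  have hd : HasDerivAt (fun t => t ^ m * ((1 - t) ^ μ * (1 + t) ^ (μ + 1))) _ t :=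
    (hasDerivAt_pow m t).mul
    ((((hasDerivAt_id t).const_sub 1).rpow_const (p := μ) (Or.inl h1.ne')).mul
      (((hasDerivAt_id t).const_add 1).rpow_const (p := μ + 1) (Or.inl h2.ne')))
  refine hd.congr_deriv ?_
  have e1 : (1 - t) ^ μ = (1 - t) ^ (μ - 1) * (1 - t) := by
    rw [← rpow_add_one h1.ne', sub_add_cancel]
  have e2 : (1 + t) ^ (μ + 1) = (1 + t) ^ μ * (1 + t) := rpow_add_one h2.ne' μ
  have e3 : (m : ℝ) * t ^ (m - 1) * t ^ 2 = m * t ^ (m + 1) := by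
    cases m <;> simp [pow_succ]; ring
  simp only [e1, e2, add_sub_cancel_right, id]
  linear_combination (-(1 - t) ^ (μ - 1) * (1 + t) ^ μ) * e3

lemma genHermiteMoment_recurrence {μ : ℝ} (hμ : 0 < μ) (m : ℕ) :
    (2 * μ + 1 + m) * genHermiteMoment μ (m + 1)
      = genHermiteMoment μ m + m * genHermiteMoment μ (m - 1) := by
  have hcont : Continuous fun t : ℝ => t ^ m * ((1 - t) ^ μ * (1 + t) ^ (μ + 1)) :=
    (continuous_pow m).mul
      (((continuous_const.sub continuous_id).rpow_const fun _ => Or.inr hμ.le).mul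
        ((continuous_const.add continuous_id).rpow_const fun _ => Or.inr (by linarith)))
  have hm := intervalIntegrable_pow_mul_weight hμ m
  have hprev := (intervalIntegrable_pow_mul_weight hμ (m - 1)).const_mul (m : ℝ)
  have hnext := (intervalIntegrable_pow_mul_weight hμ (m + 1)).const_mul (2 * μ + 1 + m)
  have hFTC := intervalIntegral.integral_eq_sub_of_hasDerivAt_of_le (by norm_num) hcont.continuousOn
    (fun t ht => hasDerivAt_pow_mul_one_sub_rpow_mul_one_add_rpow μ m ht) ((hprev.add hm).sub hnext)
  rw [intervalIntegral.integral_sub (hprev.add hm) hnext, intervalIntegral.integral_add hprev hm,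
    intervalIntegral.integral_const_mul, intervalIntegral.integral_const_mul] at hFTC
  norm_num [zero_rpow hμ.ne', zero_rpow (by linarith : μ + 1 ≠ 0)] at hFTC
  simp only [genHermiteMoment]
  linarith

lemma mul_genGamma_eq_of_recurrence {μ B : ℝ} (hμ : -1 / 2 < μ) {M : ℕ → ℝ} (h0 : M 0 = B)
    (hrec : ∀ m : ℕ, (2 * μ + 1 + m) * M (m + 1) = M m + m * M (m - 1)) (m : ℕ) :
    M m * genGamma μ m = m ! * B := by
  induction m using Nat.twoStepInduction with
  | zero => simp [genGamma, h0]
  | one =>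
    have h := hrec 0
    simp only [genGamma_succ_of_even μ Even.zero, h0, CharP.cast_eq_zero, zero_mul, add_zero] at h ⊢
    simp [genGamma]
    linear_combination h
  | more n ih₀ ih₁ =>
    have hr := hrec (n + 1)
    push_cast at hr
    show M (n + 1 + 1) * genGamma μ (n + 1 + 1) = ((n + 1 + 1)! : ℕ) * B
    have hpos : (0 : ℝ) < 2 * μ + 2 + n := by linarith [(n.cast_nonneg : (0 : ℝ) ≤ n)]
    apply mul_left_cancel₀ hpos.ne'
    rw [Nat.factorial_succ, Nat.factorial_succ]
    rw [Nat.factorial_succ] at ih₁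
    rcases n.even_or_odd with hn | hn
    · rw [genGamma_succ_of_odd μ hn.add_one]
      rw [genGamma_succ_of_even μ hn] at ih₁ ⊢
      push_cast at ih₁ ⊢
      linear_combination (n + 2) * (n + 1 + 2 * μ) * genGamma μ n * hr + (n + 2) * ih₁
        + (n + 2) * (n + 1) * (n + 1 + 2 * μ) * ih₀
    · rw [genGamma_succ_of_even μ hn.add_one]
      rw [genGamma_succ_of_odd μ hn] at ih₁ ⊢
      push_cast at ih₁ ⊢
      linear_combination (2 * μ + 2 + n) * ((n + 1) * genGamma μ n * hr + ih₁ + (n + 1) ^ 2 * ih₀)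

lemma genHermiteMoment_eq {μ : ℝ} (hμ : 0 < μ) (m : ℕ) :
    genHermiteMoment μ m = m ! * realBeta (1 / 2) μ / genGamma μ m :=
  eq_div_of_mul_eq (genGamma_pos (by linarith) m).ne' <|
    mul_genGamma_eq_of_recurrence (by linarith) (genHermiteMoment_zero hμ)
      (genHermiteMoment_recurrence hμ) m

lemma integral_genHermite_mul_weight (μ ν : ℝ) (hμ : 0 < μ) (n : ℕ) (x : ℂ) :
    ∫ t in (-1 : ℝ)..1, genHermite ν n (x * t) * (((1 - t) ^ (μ - 1) * (1 + t) ^ μ : ℝ) : ℂ)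
      = n ! * ∑ k ∈ Finset.range (n / 2 + 1), (-1) ^ k * (2 * x) ^ (n - 2 * k)
          / ((k ! : ℂ) * (genGamma ν (n - 2 * k) : ℂ)) * (genHermiteMoment μ (n - 2 * k) : ℂ) := by
  set c : ℕ → ℂ := fun k =>
    n ! * ((-1) ^ k * (2 * x) ^ (n - 2 * k) / ((k ! : ℂ) * (genGamma ν (n - 2 * k) : ℂ)))
  have hexpand : ∀ t : ℝ, genHermite ν n (x * t) * (((1 - t) ^ (μ - 1) * (1 + t) ^ μ : ℝ) : ℂ)
      = ∑ k ∈ Finset.range (n / 2 + 1),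
          c k * ((t ^ (n - 2 * k) * ((1 - t) ^ (μ - 1) * (1 + t) ^ μ) : ℝ) : ℂ) := by
    intro t
    simp only [genHermite, c, Finset.mul_sum, Finset.sum_mul, mul_left_comm (2 : ℂ), mul_pow]
    push_cast
    exact Finset.sum_congr rfl fun k _ => by ring
  have hint : ∀ k ∈ Finset.range (n / 2 + 1), IntervalIntegrable
      (fun t : ℝ => c k * ((t ^ (n - 2 * k) * ((1 - t) ^ (μ - 1) * (1 + t) ^ μ) : ℝ) : ℂ))
      volume (-1) 1 :=
    fun k _ => by
      obtain ⟨h₁, h₂⟩ := intervalIntegrable_pow_mul_weight hμ (n - 2 * k)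
      exact IntervalIntegrable.const_mul ⟨h₁.ofReal, h₂.ofReal⟩ (c k)
  simp_rw [hexpand]
  rw [intervalIntegral.integral_finsetSum hint, Finset.mul_sum]
  refine Finset.sum_congr rfl fun k _ => ?_
  rw [intervalIntegral.integral_const_mul, intervalIntegral.integral_ofReal, mul_assoc]
  rfl

/-- For `μ > 0`, `n ∈ ℕ`, `x ∈ ℂ`:
`H_n^μ(x) = (1/B(1/2, μ)) ∫_{-1}^1 H_n(xt) (1-t)^{μ-1} (1+t)^μ dt`,
where `H_n = H_n^0` is the classical physicists' Hermite polynomial. -/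
theorem genHermite_eq_integral_hermite (μ : ℝ) (hμ : 0 < μ) (n : ℕ) (x : ℂ) :
    genHermite μ n x =
      ((1 / realBeta (1/2) μ : ℝ) : ℂ) *
        ∫ t in (-1 : ℝ)..1,
          genHermite 0 n (x * t) * (((1 - t) ^ (μ - 1) * (1 + t) ^ μ : ℝ) : ℂ) := by
  have hB : (realBeta (1 / 2) μ : ℂ) ≠ 0 :=
    Complex.ofReal_ne_zero.mpr (ProbabilityTheory.beta_pos one_half_pos hμ).ne'
  rw [integral_genHermite_mul_weight μ 0 hμ, genHermite, Finset.mul_sum, Finset.mul_sum,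
    Finset.mul_sum]
  refine Finset.sum_congr rfl fun k _ => ?_
  have hγ : (genGamma μ (n - 2 * k) : ℂ) ≠ 0 :=
    Complex.ofReal_ne_zero.mpr (genGamma_pos (by linarith) _).ne'
  have hfact : ((n - 2 * k)! : ℂ) ≠ 0 := Nat.cast_ne_zero.mpr (Nat.factorial_ne_zero _)
  rw [genGamma_zero_left, genHermiteMoment_eq hμ]
  push_cast
  field_simp
end

section
/- Let μ > −1/2 be real and x, z ∈ ℂ. Then the series Σ_{n=0}^∞ H_n^μ(x) z^n/n! converges and exp(−z²) · e_μ(2xz) = Σ_{n=0}^∞ H_n^μ(x) z^n/n! (generating function for the generalized Hermite polynomials). -/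
open MeasureTheory
open scoped BigOperators Nat

/-!
Since `exp (-z²) = ∑ (-z²)ᵏ / k!` is a series in even powers of `z`, its Cauchy product with
`e_μ(2xz) = ∑ (2xz)ᵐ / γ_μ(m)` has as `n`-th term exactly `H_n^μ(x) zⁿ / n!`. Both series
converge absolutely: `γ_μ(m) ≥ cᵐ m!` with `c = min 1 (1 + 2μ) > 0`, so `e_μ` is dominated by
an exponential series.
-/

open Finset

lemma pow_mul_factorial_le_genGamma {μ c : ℝ} (hc₀ : 0 ≤ c) (hc₁ : c ≤ 1) (hcμ : c ≤ 1 + 2 * μ)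
    (n : ℕ) : c ^ n * n ! ≤ genGamma μ n := by
  induction n with
  | zero => simp [genGamma]
  | succ n ih =>
    have hn : (0 : ℝ) ≤ n := n.cast_nonneg
    have hfactor : c * (n + 1) ≤ n + 1 + 2 * μ * (if (n + 1) % 2 = 1 then (1 : ℝ) else 0) := by
      split_ifs <;> nlinarith
    calc c ^ (n + 1) * ((n + 1)! : ℝ) = c * (n + 1) * (c ^ n * n !) := by
          push_cast [Nat.factorial_succ, pow_succ]; ring
      _ ≤ _ := mul_le_mul hfactor ih (by positivity) ((by positivity : (0 : ℝ) ≤ _).trans hfactor)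

lemma summable_norm_genExp_series {μ : ℝ} (hμ : -(1 / 2) < μ) (w : ℂ) :
    Summable fun n => ‖w ^ n / (genGamma μ n : ℂ)‖ := by
  set c := min 1 (1 + 2 * μ)
  have hc : 0 < c := lt_min one_pos (by linarith)
  refine (Real.summable_pow_div_factorial (‖w‖ / c)).of_nonneg_of_le (fun _ => norm_nonneg _)
    fun n => ?_
  have hlower := pow_mul_factorial_le_genGamma hc.le (min_le_left _ _) (min_le_right _ _) n
  rw [norm_div, norm_pow, Complex.norm_real, Real.norm_of_nonneg
    ((by positivity : (0 : ℝ) ≤ _).trans hlower), div_pow, div_div]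
  gcongr

lemma hasSum_genExp {μ : ℝ} (hμ : -(1 / 2) < μ) (w : ℂ) :
    HasSum (fun n => w ^ n / (genGamma μ n : ℂ)) (genExp μ w) :=
  (summable_norm_genExp_series hμ w).of_norm.hasSum

lemma sum_range_succ_extend_two_mul_mul {R : Type*} [NonUnitalNonAssocSemiring R] (a b : ℕ → R)
    (n : ℕ) :
    ∑ j ∈ range (n + 1), Function.extend (2 * ·) a 0 j * b (n - j) =
      ∑ k ∈ range (n / 2 + 1), a k * b (n - 2 * k) := by
  have hinj : Function.Injective (2 * · : ℕ → ℕ) := mul_right_injective₀ two_ne_zero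
  refine (sum_of_injOn (2 * ·) hinj.injOn (fun k hk => ?_) (fun j _ hj => ?_) fun k _ => ?_).symm
  · simp only [coe_range, Set.mem_Iio] at hk ⊢
    omega
  · have hodd : j ∉ Set.range (2 * ·) := by
      rintro ⟨k, rfl⟩
      refine hj ⟨k, ?_, rfl⟩
      simp only [coe_range, Set.mem_Iio, mem_range] at *
      omega
    rw [Function.extend_apply' _ _ _ hodd, Pi.zero_apply, zero_mul]
  · rw [hinj.extend_apply]

lemma hasSum_sum_range_div_two_mul {R : Type*} [NormedRing R] [CompleteSpace R] {a b : ℕ → R}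
    {A B : R} (ha : HasSum a A) (ha' : Summable fun k => ‖a k‖) (hb : HasSum b B)
    (hb' : Summable fun k => ‖b k‖) :
    HasSum (fun n => ∑ k ∈ range (n / 2 + 1), a k * b (n - 2 * k)) (A * B) := by
  have hinj : Function.Injective (2 * · : ℕ → ℕ) := mul_right_injective₀ two_ne_zero
  set a₂ := Function.extend (2 * ·) a 0
  have ha₂ : Summable (‖a₂ ·‖) := by
    rw [← hinj.summable_iff fun j hj => by simp [a₂, Function.extend_apply' _ _ _ hj]]
    simpa [Function.comp_def, a₂, hinj.extend_apply] using ha'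
  have h := hasSum_sum_range_mul_of_summable_norm ha₂ hb'
  rwa [((hasSum_extend_zero hinj).2 ha).tsum_eq, hb.tsum_eq,
    funext (sum_range_succ_extend_two_mul_mul a b)] at h

lemma genHermite_mul_pow_div_factorial (μ : ℝ) (n : ℕ) (x z : ℂ) :
    genHermite μ n x * z ^ n / n ! =
      ∑ k ∈ range (n / 2 + 1),
        (-z ^ 2) ^ k / k ! * ((2 * x * z) ^ (n - 2 * k) / genGamma μ (n - 2 * k)) := by
  rw [genHermite, mul_assoc, mul_div_cancel_left₀ _ (by exact_mod_cast n.factorial_ne_zero),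
    sum_mul]
  refine sum_congr rfl fun k hk => ?_
  have h2k : 2 * k ≤ n := by rw [mem_range] at hk; omega
  have hz : z ^ n = z ^ (2 * k) * z ^ (n - 2 * k) := by rw [← pow_add, Nat.add_sub_cancel' h2k]
  rw [hz, neg_pow, pow_mul, mul_pow]
  ring

/-- Generating function for the generalized Hermite polynomials:
for `μ > -1/2` and `x, z ∈ ℂ`, the series `Σ_n H_n^μ(x) z^n/n!` converges to
`exp(-z²) e_μ(2xz)`. -/
theorem genHermite_generating_function (μ : ℝ) (hμ : -(1/2) < μ) (x z : ℂ) :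
    HasSum (fun n : ℕ => genHermite μ n x * z ^ n / (n ! : ℂ))
      (Complex.exp (-z ^ 2) * genExp μ (2 * x * z)) := by
  have hexp : HasSum (fun k => (-z ^ 2) ^ k / k !) (Complex.exp (-z ^ 2)) := by
    rw [Complex.exp_eq_exp_ℂ]
    exact NormedSpace.expSeries_div_hasSum_exp _
  simpa only [genHermite_mul_pow_div_factorial] using
    hasSum_sum_range_div_two_mul hexp (NormedSpace.norm_expSeries_div_summable _)
      (hasSum_genExp hμ _) (summable_norm_genExp_series hμ _)
end

section
/- (Inversion formula.) Let μ > −1/2 be real, n ∈ ℕ and x ∈ ℂ. Then (2x)^n / γ_μ(n) = Σ_{k=0}^{⌊n/2⌋} H_{n−2k}^μ(x) / (k! (n−2k)!). -/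
open MeasureTheory
open scoped BigOperators Nat

/-!
Expanding each `H_{n-2k}^μ(x)` by its definition turns the right-hand side into a double sum
of `(-1)^j c_{k+j} / (k! j!)` with `c_m = (2x)^{n-2m} / γ_μ(n-2m)`. Grouping by `m = k + j`,
the coefficient of `c_m` is `(1 - 1)^m / m!`, so only `c_0 = (2x)^n / γ_μ(n)` survives.
-/

open Finset

section BinomialInversion

variable {K : Type*} [Field K] [CharZero K]

theorem sum_range_neg_one_pow_div_factorial_mul_factorial (m : ℕ) :
    ∑ k ∈ range (m + 1), (-1 : K) ^ (m - k) / (k ! * (m - k)!) = 0 ^ m := by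
  calc ∑ k ∈ range (m + 1), (-1 : K) ^ (m - k) / (k ! * (m - k)!)
      = (∑ k ∈ range (m + 1), (-1 : K) ^ (m - k) * m.choose k) / m ! := by
        rw [sum_div]
        refine sum_congr rfl fun k hk => ?_
        have hm : (m ! : K) ≠ 0 := by simp [Nat.factorial_ne_zero]
        rw [Nat.cast_choose K (Nat.le_of_lt_succ (mem_range.mp hk))]
        field_simp
    _ = (1 + -1) ^ m / m ! := by rw [add_pow]; simp
    _ = 0 ^ m := by rcases m with _ | m <;> simp

theorem sum_range_sum_range_neg_one_pow_div_factorial (a : ℕ → K) (N : ℕ) :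
    ∑ k ∈ range (N + 1), ∑ j ∈ range (N - k + 1), (-1) ^ j * a (k + j) / (k ! * j !) =
      a 0 := by
  have regroup : ∀ m ∈ range (N + 1),
      ∑ k ∈ range (m + 1), (-1) ^ (m - k) * a (k + (m - k)) / (k ! * (m - k)!) =
        a m * 0 ^ m := by
    intro m _
    rw [← sum_range_neg_one_pow_div_factorial_mul_factorial, mul_sum]
    refine sum_congr rfl fun k hk => ?_
    rw [Nat.add_sub_cancel' (Nat.le_of_lt_succ (mem_range.mp hk))]
    ring
  calc _ = ∑ m ∈ range (N + 1), ∑ k ∈ range (m + 1),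
          (-1) ^ (m - k) * a (k + (m - k)) / (k ! * (m - k)!) := by
        rw [sum_range_diag_flip (N + 1) fun k j => (-1 : K) ^ j * a (k + j) / (k ! * j !)]
        refine sum_congr rfl fun k hk => ?_
        rw [Nat.sub_add_comm (Nat.le_of_lt_succ (mem_range.mp hk))]
    _ = a 0 := by simp [sum_congr rfl regroup, zero_pow_eq]

end BinomialInversion

theorem genHermite_sub_two_mul_div (μ : ℝ) (n k : ℕ) (x : ℂ) :
    genHermite μ (n - 2 * k) x / ((k ! : ℂ) * ((n - 2 * k)! : ℂ)) =
      ∑ j ∈ range (n / 2 - k + 1),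
        (-1) ^ j * ((2 * x) ^ (n - 2 * (k + j)) / ((genGamma μ (n - 2 * (k + j)) : ℝ) : ℂ)) /
          ((k ! : ℂ) * j !) := by
  have hf : ((n - 2 * k)! : ℂ) ≠ 0 := by simp [Nat.factorial_ne_zero]
  rw [genHermite, show (n - 2 * k) / 2 = n / 2 - k by omega, mul_comm (k ! : ℂ),
    mul_div_mul_left _ _ hf, sum_div]
  refine sum_congr rfl fun j _ => ?_
  rw [show n - 2 * k - 2 * j = n - 2 * (k + j) by omega]
  ring

theorem genHermite_inversion_general (μ : ℝ) (n : ℕ) (x : ℂ) :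
    (2 * x) ^ n / ((genGamma μ n : ℝ) : ℂ) =
      ∑ k ∈ Finset.range (n / 2 + 1),
        genHermite μ (n - 2 * k) x / ((k ! : ℂ) * ((n - 2 * k)! : ℂ)) := by
  simp_rw [genHermite_sub_two_mul_div]
  rw [sum_range_sum_range_neg_one_pow_div_factorial
    (fun m => (2 * x) ^ (n - 2 * m) / ((genGamma μ (n - 2 * m) : ℝ) : ℂ))]
  simp

/-- Inversion formula: for `μ > -1/2`, `n ∈ ℕ`, `x ∈ ℂ`:
`(2x)^n / γ_μ(n) = Σ_{k=0}^{⌊n/2⌋} H_{n-2k}^μ(x) / (k! (n-2k)!)`. -/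
theorem genHermite_inversion (μ : ℝ) (hμ : -(1/2) < μ) (n : ℕ) (x : ℂ) :
    (2 * x) ^ n / ((genGamma μ n : ℝ) : ℂ) =
      ∑ k ∈ Finset.range (n / 2 + 1),
        genHermite μ (n - 2 * k) x / ((k ! : ℂ) * ((n - 2 * k)! : ℂ)) :=
  genHermite_inversion_general μ n x
end

section
/- Let μ > −1/2 be real and n ∈ ℕ, and let f : ℝ → ℝ be f(x) = exp(−x²/2) H_n^μ(x). Then for every x ≠ 0, −(D_μ(D_μ f))(x) + x² f(x) = (2n + 2μ + 1) f(x); i.e., the weighted generalized Hermite function is an eigenfunction of the Bose-like oscillator Hamiltonian (1/2)(−D_μ² + x²) with eigenvalue n + μ + 1/2. -/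
/-!
Conjugation by the even Gaussian `e^{-x²/2}` turns `D_μ` into `D_μ - x`, and `[D_μ, x] = 1 + 2μs`
with `s` the reflection, so the claim reduces to the polynomial identity
`2x D_μH_n - D_μ²H_n = 2[n]_μ H_n`. On `(2x)^m / γ_μ(m)` the operator `x D_μ` acts by `[m]_μ`,
and `γ_μ(m+1) = [m+1]_μ γ_μ(m)`; this gives the lowering relation `D_μH_n = 2n H_{n-1}`, and the
identity follows by comparing coefficients, since `[n - 2k]_μ + 2k = [n]_μ`.
-/

open MeasureTheory
open scoped BigOperators Nat

/-- The generalized integer `[m]_μ = m + 2μθ_m`, with `2θ_m` written as `1 - (-1)^m`. -/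
noncomputable def genInt (μ : ℝ) (m : ℕ) : ℂ := m + μ * (1 - (-1) ^ m)

lemma genInt_succ_ne_zero {μ : ℝ} (hμ : -(1/2) < μ) (m : ℕ) : genInt μ (m + 1) ≠ 0 := by
  have key : 0 < (m : ℝ) + 1 + μ * (1 - (-1) ^ (m + 1)) := by
    rcases neg_one_pow_eq_or ℝ (m + 1) with h | h <;> rw [h] <;> nlinarith [m.cast_nonneg (α := ℝ)]
  have hcast : genInt μ (m + 1) = (((m : ℝ) + 1 + μ * (1 - (-1) ^ (m + 1)) : ℝ) : ℂ) := by
    push_cast [genInt]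
    ring
  rw [hcast]
  exact_mod_cast key.ne'

lemma neg_one_pow_sub_two_mul {R : Type*} [Ring R] {n k : ℕ} (h : 2 * k ≤ n) :
    (-1 : R) ^ (n - 2 * k) = (-1) ^ n := by
  conv_rhs => rw [← Nat.sub_add_cancel h, pow_add, pow_mul]
  simp

lemma genInt_sub_two_mul (μ : ℝ) {n k : ℕ} (h : 2 * k ≤ n) :
    genInt μ (n - 2 * k) + 2 * k = genInt μ n := by
  simp only [genInt, neg_one_pow_sub_two_mul h, Nat.cast_sub h]
  push_cast
  ring

lemma genGamma_succ (μ : ℝ) (m : ℕ) :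
    (genGamma μ (m + 1) : ℂ) = genInt μ (m + 1) * genGamma μ m := by
  rw [genGamma, genInt, neg_one_pow_eq_pow_mod_two]
  rcases Nat.mod_two_eq_zero_or_one (m + 1) with h | h <;> simp only [h] <;> push_cast <;> ring

noncomputable def hermiteTerm (μ : ℝ) (n k : ℕ) (z : ℂ) : ℂ :=
  (-1) ^ k * (2 * z) ^ (n - 2 * k) / ((k ! : ℂ) * ((genGamma μ (n - 2 * k) : ℝ) : ℂ))

lemma genHermite_eq_sum (μ : ℝ) (n : ℕ) (z : ℂ) :
    genHermite μ n z = n ! * ∑ k ∈ Finset.range (n / 2 + 1), hermiteTerm μ n k z := rfl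

lemma hermiteTerm_neg (μ : ℝ) (n k : ℕ) (z : ℂ) :
    hermiteTerm μ n k (-z) = (-1) ^ (n - 2 * k) * hermiteTerm μ n k z := by
  simp only [hermiteTerm, mul_neg, neg_pow (2 * z)]
  ring

lemma two_mul_mul_hermiteTerm {μ : ℝ} (hμ : -(1/2) < μ) {m k : ℕ} (h : 2 * k ≤ m) (z : ℂ) :
    2 * z * hermiteTerm μ m k z = genInt μ (m + 1 - 2 * k) * hermiteTerm μ (m + 1) k z := by
  have hm : m + 1 - 2 * k = m - 2 * k + 1 := by omega
  have hne := genInt_succ_ne_zero hμ (m - 2 * k)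
  simp only [hermiteTerm, hm, genGamma_succ, pow_succ]
  field_simp

lemma succ_mul_hermiteTerm_succ (μ : ℝ) (m k : ℕ) (z : ℂ) :
    (k + 1) * hermiteTerm μ (m + 2) (k + 1) z = -hermiteTerm μ m k z := by
  have hm : m + 2 - 2 * (k + 1) = m - 2 * k := by omega
  simp only [hermiteTerm, hm, Nat.factorial_succ, pow_succ]
  push_cast
  field_simp

lemma genHermite_neg (μ : ℝ) (n : ℕ) (z : ℂ) :
    genHermite μ n (-z) = (-1) ^ n * genHermite μ n z := by
  simp only [genHermite_eq_sum, Finset.mul_sum]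
  refine Finset.sum_congr rfl fun k hk => ?_
  rw [hermiteTerm_neg, neg_one_pow_sub_two_mul (by grind)]
  ring

lemma two_mul_mul_genHermite_pred {μ : ℝ} (hμ : -(1/2) < μ) (n : ℕ) (z : ℂ) :
    2 * n * z * genHermite μ (n - 1) z
      = n ! * ∑ k ∈ Finset.range (n / 2 + 1), genInt μ (n - 2 * k) * hermiteTerm μ n k z := by
  rcases n with _ | m
  · simp [genInt]
  have hsub : Finset.range (m / 2 + 1) ⊆ Finset.range ((m + 1) / 2 + 1) :=
    Finset.range_subset_range.mpr (by omega)
  rw [← Finset.sum_subset hsub fun k hk hk' => ?_, genHermite_eq_sum, Nat.add_sub_cancel,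
    Nat.factorial_succ, Finset.mul_sum, Finset.mul_sum, Finset.mul_sum]
  · refine Finset.sum_congr rfl fun k hk => ?_
    rw [← two_mul_mul_hermiteTerm hμ (by grind)]
    push_cast
    ring
  · -- the extra index, present for odd `m + 1`, has `m + 1 = 2 * k` and `[0]_μ = 0`
    have hk0 : m + 1 - 2 * k = 0 := by grind
    simp [hk0, genInt]

lemma mul_genHermite_sub_two (μ : ℝ) (n : ℕ) (z : ℂ) :
    n * (n - 1 : ℕ) * genHermite μ (n - 2) z
      = -(n ! * ∑ k ∈ Finset.range (n / 2 + 1), k * hermiteTerm μ n k z) := by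
  rcases n with _ | _ | m
  · simp
  · simp
  rw [show (m + 2) / 2 + 1 = m / 2 + 1 + 1 by omega, Finset.sum_range_succ', genHermite_eq_sum,
    Nat.add_sub_cancel, Nat.factorial_succ, Nat.factorial_succ]
  have hterm (k : ℕ) :
      ((k + 1 : ℕ) : ℂ) * hermiteTerm μ (m + 2) (k + 1) z = -hermiteTerm μ m k z := by
    push_cast
    exact succ_mul_hermiteTerm_succ μ m k z
  simp only [hterm, Finset.sum_neg_distrib, Nat.cast_zero, zero_mul, add_zero]
  push_cast
  ring

lemma genHermite_recurrence {μ : ℝ} (hμ : -(1/2) < μ) (n : ℕ) (z : ℂ) :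
    2 * z * (2 * n * genHermite μ (n - 1) z) - 4 * n * (n - 1 : ℕ) * genHermite μ (n - 2) z
      = 2 * genInt μ n * genHermite μ n z := by
  have h1 := two_mul_mul_genHermite_pred hμ n z
  have h2 := mul_genHermite_sub_two μ n z
  have hsum : ∑ k ∈ Finset.range (n / 2 + 1), (genInt μ (n - 2 * k) + 2 * k) * hermiteTerm μ n k z
      = genInt μ n * ∑ k ∈ Finset.range (n / 2 + 1), hermiteTerm μ n k z := by
    rw [Finset.mul_sum]
    refine Finset.sum_congr rfl fun k hk => ?_
    rw [genInt_sub_two_mul μ (by grind)]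
  simp only [add_mul, Finset.sum_add_distrib, mul_assoc, ← Finset.mul_sum] at hsum
  rw [genHermite_eq_sum μ n z]
  linear_combination 2 * h1 - 4 * h2 + 2 * (n ! : ℂ) * hsum

section Dunkl

variable {μ : ℝ} {f g : ℝ → ℂ} {x : ℝ}

/-- Valid also at `x = 0`, where the junk value `μ / 0 = 0` makes both sides vanish. -/
lemma mul_dunkl :
    x * dunkl μ f x = x * deriv f x + μ * (f x - f (-x)) := by
  rcases eq_or_ne x 0 with rfl | hx
  · simp
  · have hx' : (x : ℂ) ≠ 0 := Complex.ofReal_ne_zero.mpr hx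
    simp only [dunkl, Complex.ofReal_div]
    field_simp

lemma dunkl_const_mul (c : ℂ) : dunkl μ (fun y => c * f y) x = c * dunkl μ f x := by
  simp only [dunkl, deriv_const_mul_field']
  ring

lemma dunkl_sub (hf : DifferentiableAt ℝ f x) (hg : DifferentiableAt ℝ g x) :
    dunkl μ (fun y => f y - g y) x = dunkl μ f x - dunkl μ g x := by
  simp only [dunkl, deriv_fun_sub hf hg]
  ring

lemma dunkl_sum {ι : Type*} {s : Finset ι} {F : ι → ℝ → ℂ}
    (hF : ∀ i ∈ s, DifferentiableAt ℝ (F i) x) :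
    dunkl μ (fun y => ∑ i ∈ s, F i y) x = ∑ i ∈ s, dunkl μ (F i) x := by
  simp only [dunkl, deriv_fun_sum hF]
  rw [Finset.sum_add_distrib, ← Finset.sum_sub_distrib, Finset.mul_sum]

lemma dunkl_congr_of_ne_zero (h : ∀ y ≠ 0, f y = g y) (hx : x ≠ 0) :
    dunkl μ f x = dunkl μ g x := by
  have hev : f =ᶠ[nhds x] g := by
    filter_upwards [eventually_ne_nhds hx] with y hy using h y hy
  simp only [dunkl, hev.deriv_eq, h x hx, h (-x) (neg_ne_zero.mpr hx)]

lemma dunkl_mul_of_even {w : ℝ → ℂ} (hw : ∀ y, w (-y) = w y)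
    (hwx : DifferentiableAt ℝ w x) (hf : DifferentiableAt ℝ f x) :
    dunkl μ (fun y => w y * f y) x = deriv w x * f x + w x * dunkl μ f x := by
  simp only [dunkl, deriv_fun_mul hwx hf, hw]
  ring

lemma dunkl_ofReal_mul (hx : x ≠ 0) (hf : DifferentiableAt ℝ f x) :
    dunkl μ (fun y => (y : ℂ) * f y) x = f x + 2 * μ * f (-x) + x * dunkl μ f x := by
  have hid : HasDerivAt (fun y : ℝ => (y : ℂ)) 1 x := (hasDerivAt_id (x : ℂ)).comp_ofReal
  have hx' : (x : ℂ) ≠ 0 := Complex.ofReal_ne_zero.mpr hx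
  simp only [dunkl, deriv_fun_mul hid.differentiableAt hf, hid.deriv, Complex.ofReal_div,
    Complex.ofReal_neg]
  field_simp
  ring

end Dunkl

lemma mul_dunkl_pow (μ : ℝ) (m : ℕ) (x : ℝ) :
    x * dunkl μ (fun y => (y : ℂ) ^ m) x = genInt μ m * (x : ℂ) ^ m := by
  have hderiv : x * deriv (fun y : ℝ => (y : ℂ) ^ m) x = m * (x : ℂ) ^ m := by
    rw [((hasDerivAt_pow m (x : ℂ)).comp_ofReal).deriv]
    rcases m with _ | m
    · simp
    · push_cast
      ring
  rw [mul_dunkl, hderiv, Complex.ofReal_neg, neg_pow, genInt]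
  ring

lemma differentiable_genHermite (μ : ℝ) (n : ℕ) : Differentiable ℂ (genHermite μ n) := by
  unfold genHermite
  fun_prop

lemma differentiableAt_genHermite_ofReal (μ : ℝ) (n : ℕ) (x : ℝ) :
    DifferentiableAt ℝ (fun y : ℝ => genHermite μ n y) x :=
  ((differentiable_genHermite μ n x).hasDerivAt.comp_ofReal).differentiableAt

lemma mul_dunkl_hermiteTerm (μ : ℝ) (n k : ℕ) (x : ℝ) :
    x * dunkl μ (fun y => hermiteTerm μ n k y) x = genInt μ (n - 2 * k) * hermiteTerm μ n k x := by
  set c : ℂ := (-1) ^ k * 2 ^ (n - 2 * k) / ((k ! : ℂ) * ((genGamma μ (n - 2 * k) : ℝ) : ℂ))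
  have hterm (z : ℂ) : hermiteTerm μ n k z = c * z ^ (n - 2 * k) := by
    simp only [hermiteTerm, c, mul_pow]
    ring
  simp only [hterm, dunkl_const_mul]
  linear_combination c * mul_dunkl_pow μ (n - 2 * k) x

lemma dunkl_genHermite {μ : ℝ} (hμ : -(1/2) < μ) (n : ℕ) {x : ℝ} (hx : x ≠ 0) :
    dunkl μ (fun y => genHermite μ n y) x = 2 * n * genHermite μ (n - 1) x := by
  have hterm (k : ℕ) : DifferentiableAt ℝ (fun y : ℝ => hermiteTerm μ n k y) x := by
    unfold hermiteTerm
    fun_prop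
  have hx' : (x : ℂ) ≠ 0 := Complex.ofReal_ne_zero.mpr hx
  refine mul_left_cancel₀ hx' ?_
  simp only [genHermite_eq_sum μ n, dunkl_const_mul]
  rw [dunkl_sum fun k _ => hterm k, mul_left_comm, Finset.mul_sum]
  simp only [mul_dunkl_hermiteTerm]
  linear_combination -two_mul_mul_genHermite_pred hμ n x

lemma hasDerivAt_gaussian (x : ℝ) :
    HasDerivAt (fun y : ℝ => Complex.exp (-(y : ℂ) ^ 2 / 2))
      (-x * Complex.exp (-(x : ℂ) ^ 2 / 2)) x := by
  have h : HasDerivAt (fun z : ℂ => -z ^ 2 / 2) (-(x : ℂ)) x :=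
    (((hasDerivAt_pow 2 (x : ℂ)).fun_neg).div_const 2).congr_deriv (by ring)
  convert (h.cexp).comp_ofReal using 1
  ring

lemma dunkl_gaussian_mul (μ : ℝ) {f : ℝ → ℂ} {x : ℝ} (hf : DifferentiableAt ℝ f x) :
    dunkl μ (fun y => Complex.exp (-(y : ℂ) ^ 2 / 2) * f y) x
      = Complex.exp (-(x : ℂ) ^ 2 / 2) * (dunkl μ f x - x * f x) := by
  rw [dunkl_mul_of_even (fun y => by simp) (hasDerivAt_gaussian x).differentiableAt hf,
    (hasDerivAt_gaussian x).deriv]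
  ring

/-- For `μ > -1/2`, `n ∈ ℕ` and `f(x) = exp(-x²/2) H_n^μ(x)`:
for every `x ≠ 0`, `-(D_μ(D_μ f))(x) + x² f(x) = (2n + 2μ + 1) f(x)`,
i.e. the weighted generalized Hermite function is an eigenfunction of the
Bose-like oscillator Hamiltonian `(1/2)(-D_μ² + x²)` with eigenvalue `n + μ + 1/2`. -/
theorem genHermite_function_oscillator_eigen (μ : ℝ) (hμ : -(1/2) < μ) (n : ℕ)
    (x : ℝ) (hx : x ≠ 0) :
    -(dunkl μ (dunkl μ (fun y : ℝ => Complex.exp (-(y : ℂ) ^ 2 / 2) * genHermite μ n y)) x)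
        + (x : ℂ) ^ 2 * (Complex.exp (-(x : ℂ) ^ 2 / 2) * genHermite μ n x)
      = (2 * (n : ℂ) + 2 * (μ : ℂ) + 1) *
          (Complex.exp (-(x : ℂ) ^ 2 / 2) * genHermite μ n x) := by
  have hH := differentiableAt_genHermite_ofReal μ
  have hfirst (y : ℝ) (hy : y ≠ 0) :
      dunkl μ (fun y : ℝ => Complex.exp (-(y : ℂ) ^ 2 / 2) * genHermite μ n y) y
        = Complex.exp (-(y : ℂ) ^ 2 / 2) *
            (2 * n * genHermite μ (n - 1) y - y * genHermite μ n y) := by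
    rw [dunkl_gaussian_mul μ (hH n y), dunkl_genHermite hμ n hy]
  have hxH : DifferentiableAt ℝ (fun y : ℝ => (y : ℂ) * genHermite μ n y) x :=
    Complex.ofRealCLM.differentiableAt.mul (hH n x)
  have hG : DifferentiableAt ℝ
      (fun y : ℝ => 2 * n * genHermite μ (n - 1) y - y * genHermite μ n y) x :=
    ((hH (n - 1) x).const_mul _).sub hxH
  rw [dunkl_congr_of_ne_zero hfirst hx, dunkl_gaussian_mul μ hG,
    dunkl_sub ((hH (n - 1) x).const_mul _) hxH, dunkl_const_mul, dunkl_ofReal_mul hx (hH n x),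
    dunkl_genHermite hμ _ hx, dunkl_genHermite hμ n hx, Complex.ofReal_neg, genHermite_neg,
    Nat.sub_sub]
  have hrec := genHermite_recurrence hμ n x
  rw [genInt] at hrec
  linear_combination Complex.exp (-(x : ℂ) ^ 2 / 2) * hrec
end
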